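/- Let n ≥ 1 and let t_1, …, t_{n+1} be pairwise distinct real numbers. Let V be the (n+1)×(n+1) Vandermonde matrix with entries V_{i,j} = t_i^{j−1}. Then V = F_n · F_{n−1} · ⋯ · F_1 · D · G_1 · G_2 · ⋯ · G_n, where: for i = 1, …, n, F_i is the (n+1)×(n+1) lower bidiagonal matrix with unit diagonal whose only possibly nonzero off-diagonal entries are (F_i)_{p,p−1} = m_{p,p−i} for p = i+1, …, n+1, with m_{p,q} := ∏_{k=1}^{q−1} (t_p − t_{p−k})/(t_{p−1} − t_{p−k−1}); D is the diagonal matrix with diagonal entries p_i = ∏_{k=1}^{i−1}(t_i − t_k); and for i = 1, …, n, G_i is the (n+1)×(n+1) upper bidiagonal matrix with unit diagonal whose only possibly nonzero off-diagonal entries are (G_i)_{p−1,p} = t_{p−i} for p = i+1, …, n+1 (empty products equal 1). -/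

import Mathlib

/-!
Write `x_p = t (p + 1)` for the nodes and `W` for the Newton matrix
`W p q = (x_p - t 1) ⋯ (x_p - t q)`. Right multiplication by `G_{r+1}` adds `t (q - r)` times
column `q - 1` to column `q`, which turns the column of values of
`x ^ min q r * (x - t 1) ⋯ (x - t (q - r))` into the one for `r + 1` because
`(x - t j) + t j = x`; hence `W * G_1 ⋯ G_n = V`.
On the other side, the partial products `F_n ⋯ F_c` are unit lower triangular with entries
`∏_{k=c}^{q} (x_p - t k) / (x_q - t k)` below the diagonal in columns `q ≥ c - 1`, and for `c = 1`
this is the factor `L` of `W = L * D`.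
-/

open Finset

/-- Off-diagonal entries of the bidiagonal factorization (1-based indices):
`m_{p,q} = ∏_{k=1}^{q−1} (t_p − t_{p−k})/(t_{p−1} − t_{p−k−1})`. -/
noncomputable def mEntry (t : ℕ → ℝ) (p q : ℕ) : ℝ :=
  ∏ k ∈ Finset.Icc 1 (q - 1), (t p - t (p - k)) / (t (p - 1) - t (p - k - 1))

/-- Diagonal entries `p_i = ∏_{k=1}^{i−1} (t_i − t_k)` (1-based index `i`). -/
noncomputable def pEntry (t : ℕ → ℝ) (i : ℕ) : ℝ :=
  ∏ k ∈ Finset.Icc 1 (i - 1), (t i - t k)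

/-- `F_i`: lower bidiagonal matrix with unit diagonal whose only possibly
nonzero off-diagonal entries are `(F_i)_{p,p−1} = m_{p,p−i}` for
`p = i+1, …, n+1` (1-based `p`). -/
noncomputable def Fmat (n : ℕ) (t : ℕ → ℝ) (i : ℕ) :
    Matrix (Fin (n + 1)) (Fin (n + 1)) ℝ :=
  Matrix.of fun p q =>
    if p.val = q.val then 1
    else if p.val = q.val + 1 ∧ i ≤ p.val then mEntry t (p.val + 1) (p.val + 1 - i)
    else 0

/-- The diagonal matrix `D` with entries `p_1, …, p_{n+1}`. -/
noncomputable def Dmat (n : ℕ) (t : ℕ → ℝ) :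
    Matrix (Fin (n + 1)) (Fin (n + 1)) ℝ :=
  Matrix.diagonal fun i => pEntry t (i.val + 1)

/-- `G_i`: upper bidiagonal matrix with unit diagonal whose only possibly
nonzero off-diagonal entries are `(G_i)_{p−1,p} = t_{p−i}` for
`p = i+1, …, n+1` (1-based `p`). -/
noncomputable def Gmat (n : ℕ) (t : ℕ → ℝ) (i : ℕ) :
    Matrix (Fin (n + 1)) (Fin (n + 1)) ℝ :=
  Matrix.of fun p q =>
    if p.val = q.val then 1
    else if q.val = p.val + 1 ∧ i ≤ q.val then t (q.val + 1 - i)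
    else 0

section MixedNewtonBasis

variable {R : Type*} [CommRing R]

def mixedNewtonBasis (t : ℕ → R) (r q : ℕ) (x : R) : R :=
  x ^ min q r * ∏ k ∈ Icc 1 (q - r), (x - t k)

theorem mixedNewtonBasis_zero (t : ℕ → R) (q : ℕ) (x : R) :
    mixedNewtonBasis t 0 q x = ∏ k ∈ Icc 1 q, (x - t k) := by
  simp [mixedNewtonBasis]

theorem mixedNewtonBasis_of_le (t : ℕ → R) {r q : ℕ} (h : q ≤ r) (x : R) :
    mixedNewtonBasis t r q x = x ^ q := by
  simp [mixedNewtonBasis, min_eq_left h, Nat.sub_eq_zero_of_le h]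

theorem mixedNewtonBasis_add_mul (t : ℕ → R) (r q : ℕ) (x : R) :
    mixedNewtonBasis t r q x +
        (if r < q then mixedNewtonBasis t r (q - 1) x * t (q - r) else 0) =
      mixedNewtonBasis t (r + 1) q x := by
  unfold mixedNewtonBasis
  by_cases h : r < q
  · rw [if_pos h, min_eq_right h.le, min_eq_right (by omega), min_eq_right (by omega),
      show q - r = q - (r + 1) + 1 by omega, prod_Icc_succ_top (by omega),
      show q - 1 - r = q - (r + 1) by omega]
    ring
  · rw [if_neg h, add_zero, min_eq_left (by omega), min_eq_left (by omega),
      Nat.sub_eq_zero_of_le (by omega), Nat.sub_eq_zero_of_le (by omega)]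

end MixedNewtonBasis

variable {n : ℕ} {t : ℕ → ℝ}

theorem of_mul_Fmat_apply (f : ℕ → ℕ → ℝ) (c : ℕ) (p q : Fin (n + 1)) :
    (Matrix.of (fun p q : Fin (n + 1) => f p q) * Fmat n t c) p q =
      f p q + if q < n ∧ c ≤ q + 1 then f p (q + 1) * mEntry t (q + 2) (q + 2 - c) else 0 := by
  rw [Matrix.mul_apply]
  simp only [Matrix.of_apply, Fmat]
  rw [Fin.sum_univ_eq_sum_range (fun j => f p j * if j = q then 1 else
    if j = q + 1 ∧ c ≤ j then mEntry t (j + 1) (j + 1 - c) else 0) (n + 1)]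
  have hsplit : ∀ j : ℕ, (f p j * if j = q then 1 else
      if j = q + 1 ∧ c ≤ j then mEntry t (j + 1) (j + 1 - c) else 0) =
      (if j = q then f p q else 0) +
        if j = q + 1 then (if c ≤ q + 1 then f p (q + 1) * mEntry t (q + 2) (q + 2 - c) else 0)
        else 0 := by
    intro j
    split_ifs <;> subst_vars <;> first | omega | ring
  rw [Finset.sum_congr rfl fun j _ => hsplit j, Finset.sum_add_distrib, Finset.sum_ite_eq',
    Finset.sum_ite_eq', if_pos (Finset.mem_range.mpr q.is_lt), ite_and]
  simp only [Finset.mem_range, Nat.add_lt_add_iff_right]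

theorem of_mul_Gmat_apply (f : ℕ → ℕ → ℝ) (i : ℕ) (p q : Fin (n + 1)) :
    (Matrix.of (fun p q : Fin (n + 1) => f p q) * Gmat n t i) p q =
      f p q + if 1 ≤ (q : ℕ) ∧ i ≤ q then f p (q - 1) * t (q + 1 - i) else 0 := by
  rw [Matrix.mul_apply]
  simp only [Matrix.of_apply, Gmat]
  rw [Fin.sum_univ_eq_sum_range (fun j => f p j * if j = q then 1 else
    if (q : ℕ) = j + 1 ∧ i ≤ q then t (q + 1 - i) else 0) (n + 1)]
  have hsplit : ∀ j : ℕ, (f p j * if j = q then 1 else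
      if (q : ℕ) = j + 1 ∧ i ≤ q then t (q + 1 - i) else 0) =
      (if j = q then f p q else 0) +
        if j = q - 1 then (if 1 ≤ (q : ℕ) ∧ i ≤ q then f p (q - 1) * t (q + 1 - i) else 0)
        else 0 := by
    intro j
    split_ifs <;> subst_vars <;> first | omega | ring
  rw [Finset.sum_congr rfl fun j _ => hsplit j, Finset.sum_add_distrib, Finset.sum_ite_eq',
    Finset.sum_ite_eq', if_pos (Finset.mem_range.mpr q.is_lt),
    if_pos (Finset.mem_range.mpr (by omega))]

theorem newtonMatrix_mul_prod_Gmat (r : ℕ) :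
    Matrix.of (fun p q : Fin (n + 1) => ∏ k ∈ Icc 1 (q : ℕ), (t (p + 1) - t k)) *
        ((List.range r).map fun k => Gmat n t (k + 1)).prod =
      Matrix.of fun p q : Fin (n + 1) => mixedNewtonBasis t r q (t (p + 1)) := by
  induction r with
  | zero => simp [mixedNewtonBasis_zero]
  | succ r ih =>
    rw [List.range_succ, List.map_append, List.prod_append, ← mul_assoc, ih]
    ext p q
    rw [List.map_singleton, List.prod_singleton,
      of_mul_Gmat_apply fun p q => mixedNewtonBasis t r q (t (p + 1)), Matrix.of_apply,
      ← mixedNewtonBasis_add_mul]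
    congr 1
    exact if_congr (by omega) (by rw [show (q : ℕ) + 1 - (r + 1) = q - r by omega]) rfl

theorem mEntry_succ_eq_div {p q : ℕ} (hq : q ≤ p + 1) :
    mEntry t (p + 1) q =
      (∏ j ∈ Ico (p + 2 - q) (p + 1), (t (p + 1) - t j)) / ∏ j ∈ Ico (p + 1 - q) p, (t p - t j) := by
  have hIcc : Icc 1 (q - 1) = Ico 1 q := by ext; simp; omega
  rw [mEntry, hIcc, prod_div_distrib,
    prod_Ico_reflect (fun j => t (p + 1) - t j) 1 (n := p + 1) (by omega)]
  have hden : ∀ k, t (p + 1 - 1) - t (p + 1 - k - 1) = t p - t (p - k) := by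
    intro k; rw [show p + 1 - k - 1 = p - k by omega, Nat.add_sub_cancel]
  simp only [hden]
  rw [prod_Ico_reflect (fun j => t p - t j) 1 (by omega), Nat.add_sub_cancel, Nat.add_sub_cancel]

theorem sub_ne_zero_of_injOn_Icc (ht : Set.InjOn t (Set.Icc 1 (n + 1))) {k l : ℕ}
    (hl : 1 ≤ l) (hlk : l < k) (hk : k ≤ n + 1) : t k - t l ≠ 0 :=
  sub_ne_zero.mpr (ht.ne ⟨by omega, hk⟩ ⟨hl, by omega⟩ hlk.ne')

theorem prod_Ico_sub_ne_zero (ht : Set.InjOn t (Set.Icc 1 (n + 1))) {a m : ℕ} (ha : 1 ≤ a)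
    (hm : m ≤ n + 1) : ∏ k ∈ Ico a m, (t m - t k) ≠ 0 :=
  prod_ne_zero_iff.mpr fun k hk => by
    rw [mem_Ico] at hk
    exact sub_ne_zero_of_injOn_Icc ht (by omega) hk.2 hm

noncomputable def fmatProdEntry (t : ℕ → ℝ) (c p q : ℕ) : ℝ :=
  if q ≤ p ∧ c ≤ q + 1 then ∏ k ∈ Ico c (q + 1), (t (p + 1) - t k) / (t (q + 1) - t k)
  else if p = q then 1 else 0

theorem prod_Ico_sub_div_self (ht : Set.InjOn t (Set.Icc 1 (n + 1))) {c p : ℕ} (hc : 1 ≤ c)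
    (hp : p ≤ n) : ∏ k ∈ Ico c (p + 1), (t (p + 1) - t k) / (t (p + 1) - t k) = 1 :=
  prod_eq_one fun k hk => div_self <| by
    rw [mem_Ico] at hk
    exact sub_ne_zero_of_injOn_Icc ht (by omega) (by omega) (by omega)

theorem prod_ratio_succ_add_mul_mEntry (ht : Set.InjOn t (Set.Icc 1 (n + 1))) {c p q : ℕ}
    (hc : 1 ≤ c) (hcq : c < q + 1) (hqp : q < p) (hp : p ≤ n) :
    ∏ k ∈ Ico (c + 1) (q + 1), (t (p + 1) - t k) / (t (q + 1) - t k) +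
        (∏ k ∈ Ico (c + 1) (q + 1 + 1), (t (p + 1) - t k) / (t (q + 1 + 1) - t k)) *
          mEntry t (q + 2) (q + 2 - c) =
      ∏ k ∈ Ico c (q + 1), (t (p + 1) - t k) / (t (q + 1) - t k) := by
  rw [mEntry_succ_eq_div (p := q + 1) (by omega), show q + 1 + 2 - (q + 2 - c) = c + 1 by omega,
    show q + 1 + 1 - (q + 2 - c) = c by omega]
  simp only [prod_div_distrib]
  rw [prod_Ico_succ_top (by omega : c + 1 ≤ q + 1) fun k => t (p + 1) - t k,
    prod_eq_prod_Ico_succ_bot hcq fun k => t (p + 1) - t k,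
    prod_eq_prod_Ico_succ_bot hcq fun k => t (q + 1) - t k]
  have hb := prod_Ico_sub_ne_zero ht (a := c + 1) (m := q + 1) (by omega) (by omega)
  have hC := prod_Ico_sub_ne_zero ht (a := c + 1) (m := q + 1 + 1) (by omega) (by omega)
  have hqc := sub_ne_zero_of_injOn_Icc ht hc hcq (by omega)
  -- the two terms combine through `(t (q + 1) - t c) + (t (p + 1) - t (q + 1)) = t (p + 1) - t c`
  field_simp
  ring

theorem fmatProdEntry_succ_add (ht : Set.InjOn t (Set.Icc 1 (n + 1))) {c p : ℕ} (hc : 1 ≤ c)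
    (hp : p ≤ n) (q : ℕ) :
    fmatProdEntry t (c + 1) p q + (if q < n ∧ c ≤ q + 1 then
        fmatProdEntry t (c + 1) p (q + 1) * mEntry t (q + 2) (q + 2 - c) else 0) =
      fmatProdEntry t c p q := by
  unfold fmatProdEntry
  rcases lt_trichotomy q p with hqp | rfl | hpq
  · rcases lt_or_ge (q + 1) c with hqc | hcq
    · simp (disch := omega) only [if_pos, if_neg, add_zero]
    rcases hcq.eq_or_lt with rfl | hcq
    · simp (disch := omega) only [if_pos, if_neg, Ico_self, prod_empty, zero_add, one_mul,
        show q + 2 - (q + 1) = 1 by omega, mEntry, Icc_eq_empty, prod_empty]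
    · simp (disch := omega) only [if_pos]
      exact prod_ratio_succ_add_mul_mEntry ht hc hcq hqp hp
  · simp (disch := omega) only [if_neg, zero_mul, ite_self, add_zero, if_true,
      prod_Ico_sub_div_self ht hc hp, prod_Ico_sub_div_self ht (c := c + 1) (by omega) hp]
  · simp (disch := omega) only [if_neg, zero_mul, ite_self, add_zero]

theorem fmatProd_succ_mul_Fmat (ht : Set.InjOn t (Set.Icc 1 (n + 1))) {c : ℕ} (hc : 1 ≤ c) :
    Matrix.of (fun p q : Fin (n + 1) => fmatProdEntry t (c + 1) p q) * Fmat n t c =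
      Matrix.of fun p q : Fin (n + 1) => fmatProdEntry t c p q := by
  ext p q
  rw [of_mul_Fmat_apply (fun p q => fmatProdEntry t (c + 1) p q), Matrix.of_apply]
  exact fmatProdEntry_succ_add ht hc p.is_le q

theorem fmatProd_top :
    Matrix.of (fun p q : Fin (n + 1) => fmatProdEntry t (n + 1) p q) = 1 := by
  ext p q
  have hq := q.is_le
  by_cases hpq : p = q
  · subst hpq
    simp (disch := omega) [fmatProdEntry, Ico_eq_empty_of_le]
  · have hpq' := Fin.val_ne_of_ne hpq
    rw [Matrix.of_apply, Matrix.one_apply_ne hpq, fmatProdEntry, if_neg (by omega), if_neg hpq']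

theorem prod_Fmat (ht : Set.InjOn t (Set.Icc 1 (n + 1))) {r : ℕ} (hr : r ≤ n) :
    ((List.range r).map fun k => Fmat n t (n - k)).prod =
      Matrix.of fun p q : Fin (n + 1) => fmatProdEntry t (n + 1 - r) p q := by
  induction r with
  | zero => simp [fmatProd_top]
  | succ r ih =>
    rw [List.range_succ, List.map_append, List.prod_append, ih (by omega), List.map_singleton,
      List.prod_singleton, show n + 1 - r = n - r + 1 by omega, fmatProd_succ_mul_Fmat ht (by omega),
      show n + 1 - (r + 1) = n - r by omega]

theorem fmatProd_one_mul_Dmat (ht : Set.InjOn t (Set.Icc 1 (n + 1))) :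
    Matrix.of (fun p q : Fin (n + 1) => fmatProdEntry t 1 p q) * Dmat n t =
      Matrix.of fun p q : Fin (n + 1) => ∏ k ∈ Icc 1 (q : ℕ), (t (p + 1) - t k) := by
  ext p q
  rw [Dmat, Matrix.mul_diagonal, Matrix.of_apply, Matrix.of_apply, fmatProdEntry, pEntry,
    Nat.add_sub_cancel, ← Ico_add_one_right_eq_Icc]
  by_cases hqp : (q : ℕ) ≤ p
  · rw [if_pos ⟨hqp, by omega⟩, prod_div_distrib,
      div_mul_cancel₀ _ (prod_Ico_sub_ne_zero ht le_rfl (by omega))]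
  · rw [if_neg (by omega), if_neg (by omega), zero_mul, eq_comm]
    exact prod_eq_zero (i := p + 1) (mem_Ico.mpr ⟨by omega, by omega⟩) (sub_self _)

theorem vandermonde_bidiagonal_factorization_general
    (n : ℕ) (t : ℕ → ℝ)
    (ht : ∀ i j, 1 ≤ i → i ≤ n + 1 → 1 ≤ j → j ≤ n + 1 → i ≠ j → t i ≠ t j)
    (V : Matrix (Fin (n + 1)) (Fin (n + 1)) ℝ)
    (hV : ∀ i j, V i j = (t (i.val + 1)) ^ j.val) :
    V = ((List.range n).map (fun k => Fmat n t (n - k))).prod * Dmat n t *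
        ((List.range n).map (fun k => Gmat n t (k + 1))).prod := by
  have hinj : Set.InjOn t (Set.Icc 1 (n + 1)) := fun i hi j hj hij =>
    by_contra fun hne => ht i j hi.1 hi.2 hj.1 hj.2 hne hij
  rw [prod_Fmat hinj le_rfl, Nat.add_sub_cancel_left, fmatProd_one_mul_Dmat hinj,
    newtonMatrix_mul_prod_Gmat]
  ext p q
  rw [hV, Matrix.of_apply, mixedNewtonBasis_of_le t q.is_le]

/-- bidiagonal factorization of the Vandermonde matrix:
`V = F_n ⋯ F_1 · D · G_1 ⋯ G_n` for pairwise distinct nodes `t 1, …, t (n+1)`. -/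
theorem vandermonde_bidiagonal_factorization
    (n : ℕ) (hn : 1 ≤ n) (t : ℕ → ℝ)
    (ht : ∀ i j, 1 ≤ i → i ≤ n + 1 → 1 ≤ j → j ≤ n + 1 → i ≠ j → t i ≠ t j)
    (V : Matrix (Fin (n + 1)) (Fin (n + 1)) ℝ)
    (hV : ∀ i j, V i j = (t (i.val + 1)) ^ j.val) :
    V = ((List.range n).map (fun k => Fmat n t (n - k))).prod * Dmat n t *
        ((List.range n).map (fun k => Gmat n t (k + 1))).prod :=
  vandermonde_bidiagonal_factorization_general n t ht V hV
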